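/- Let ψ : U → ℝⁿ be a C^∞ map on an open set U ⊆ ℝᵐ with Dψ(u) injective for every u, define G : ℝⁿ × U → ℝᵐ by G(a, u) := Dψ(u)ᵀ(a − ψ(u)), and let (a₀, u₀) satisfy G(a₀, u₀) = 0. Write H for the Hessian at u₀ of d_{a₀}(u) := ½‖a₀ − ψ(u)‖². Then DG(a₀,u₀)(ȧ, u̇) = Dψ(u₀)ᵀȧ − H u̇ for all (ȧ, u̇) ∈ ℝⁿ × ℝᵐ, so ker DG(a₀,u₀) = {(ȧ, u̇) : Dψ(u₀)ᵀȧ = H u̇}; and the linear map ker DG(a₀,u₀) → ℝⁿ, (ȧ, u̇) ↦ ȧ, is bijective if and only if H is invertible. -/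

import Mathlib

/-!
`G(a₀, ·)` is minus the gradient of `d_{a₀}`, so its derivative at `u₀` is `-H`; writing
`G(a, u) = G(a₀, u) + Dψ(u)ᵀ (a - a₀)` then gives `DG(a₀, u₀)(ȧ, u̇) = Dψ(u₀)ᵀ ȧ - H u̇`.
Hence `(0, u̇)` lies in the kernel iff `H u̇ = 0`, and every `ȧ` lifts to the kernel once `H` is
onto; as `H` is an endomorphism of a finite-dimensional space, injective already means invertible.
-/

open scoped RealInnerProductSpace

noncomputable section

open ContinuousLinearMap Function Topology

section LinearAlgebra

variable {K V W : Type*} [Field K] [AddCommGroup V] [Module K V] [AddCommGroup W] [Module K W]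

theorem bijective_fst_ker_iff [FiniteDimensional K W] (L : V × W →ₗ[K] W) (B : V →ₗ[K] W)
    (H : W →ₗ[K] W) (hL : ∀ x y, L (x, y) = B x - H y) :
    Bijective (fun q : LinearMap.ker L => (q : V × W).1) ↔ Bijective H := by
  have mem_ker : ∀ x y, (x, y) ∈ LinearMap.ker L ↔ B x = H y := fun x y => by
    rw [LinearMap.mem_ker, hL, sub_eq_zero]
  constructor
  · intro hproj
    have hinj : Injective H := by
      rw [← LinearMap.ker_eq_bot, LinearMap.ker_eq_bot']
      intro y hy
      have h : (⟨(0, y), (mem_ker 0 y).2 (by simp [hy])⟩ : LinearMap.ker L) = 0 := hproj.1 rfl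
      simpa using congrArg (fun q : LinearMap.ker L => (q : V × W).2) h
    exact ⟨hinj, LinearMap.injective_iff_surjective.mp hinj⟩
  · intro hH
    refine ⟨?_, fun x => ?_⟩
    · rintro ⟨⟨x, y⟩, hxy⟩ ⟨⟨x', y'⟩, hxy'⟩ (rfl : x = x')
      obtain rfl : y = y' := hH.injective (((mem_ker x y).1 hxy).symm.trans ((mem_ker x y').1 hxy'))
      rfl
    · obtain ⟨y, hy⟩ := hH.surjective (B x)
      exact ⟨⟨(x, y), (mem_ker x y).2 hy.symm⟩, rfl⟩

end LinearAlgebra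

section Calculus

variable {E F : Type*} [NormedAddCommGroup E] [InnerProductSpace ℝ E] [CompleteSpace E]
  [NormedAddCommGroup F] [InnerProductSpace ℝ F] [CompleteSpace F]

/-- Over `ℝ`, `starRingEnd ℝ` is definitionally the identity, so the conjugate-linear adjoint
is an `ℝ`-linear map. -/
def adjointCLM : (E →L[ℝ] F) →L[ℝ] (F →L[ℝ] E) :=
  ContinuousLinearMap.adjoint.toContinuousLinearEquiv.toContinuousLinearMap

/-- The paper's `G`: minus the gradient of `u ↦ ½‖a - ψ u‖²`. -/
def criticalPointMap (ψ : E → F) (a : F) (u : E) : E :=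
  adjoint (fderiv ℝ ψ u) (a - ψ u)

variable {ψ : E → F} {u₀ : E}

theorem hasFDerivAt_half_norm_sub_sq (a : F) (hψ : DifferentiableAt ℝ ψ u₀) :
    HasFDerivAt (fun u => (1 / 2 : ℝ) * ‖a - ψ u‖ ^ 2)
      (-innerSL ℝ (criticalPointMap ψ a u₀)) u₀ := by
  refine (((hψ.hasFDerivAt.const_sub a).norm_sq).const_mul (1 / 2 : ℝ)).congr_fderiv ?_
  ext v
  simp [criticalPointMap, adjoint_inner_left]

theorem differentiableAt_adjoint_fderiv (hψ : ContDiffAt ℝ 2 ψ u₀) :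
    DifferentiableAt ℝ (fun u => adjoint (fderiv ℝ ψ u)) u₀ :=
  (adjointCLM : (E →L[ℝ] F) →L[ℝ] _).differentiableAt.comp u₀
    ((hψ.fderiv_right (m := 1) le_rfl).differentiableAt one_ne_zero)

theorem differentiableAt_criticalPointMap (a : F) (hψ : ContDiffAt ℝ 2 ψ u₀) :
    DifferentiableAt ℝ (criticalPointMap ψ a) u₀ :=
  (differentiableAt_adjoint_fderiv hψ).clm_apply
    ((hψ.differentiableAt two_ne_zero).const_sub a)

theorem fderiv_fderiv_half_norm_sub_sq_apply (a : F) (hψ : ContDiffAt ℝ 2 ψ u₀) (v w : E) :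
    fderiv ℝ (fderiv ℝ fun u => (1 / 2 : ℝ) * ‖a - ψ u‖ ^ 2) u₀ v w =
      -⟪fderiv ℝ (criticalPointMap ψ a) u₀ v, w⟫ := by
  have hgrad : fderiv ℝ (fun u => (1 / 2 : ℝ) * ‖a - ψ u‖ ^ 2) =ᶠ[𝓝 u₀]
      fun u => -innerSL ℝ (criticalPointMap ψ a u) :=
    (hψ.eventually (by simp)).mono fun u hu =>
      (hasFDerivAt_half_norm_sub_sq a (hu.differentiableAt two_ne_zero)).fderiv
  have hD : HasFDerivAt (fun u => -innerSL ℝ (criticalPointMap ψ a u))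
      (-(innerSL ℝ).comp (fderiv ℝ (criticalPointMap ψ a) u₀)) u₀ :=
    ((innerSL ℝ).hasFDerivAt.comp u₀ (differentiableAt_criticalPointMap a hψ).hasFDerivAt).neg
  rw [hgrad.fderiv_eq, hD.fderiv]
  simp

/-- Since `a - a₀` vanishes at `a₀`, the derivative of `u ↦ Dψ(u)ᵀ` does not contribute to
the derivative of `(a, u) ↦ Dψ(u)ᵀ (a - a₀)` at `(a₀, u₀)`. -/
theorem hasFDerivAt_criticalPointMap_uncurry (a₀ : F) (hψ : ContDiffAt ℝ 2 ψ u₀) :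
    HasFDerivAt (fun p : F × E => criticalPointMap ψ p.1 p.2)
      ((adjoint (fderiv ℝ ψ u₀)).comp (fst ℝ F E) +
        (fderiv ℝ (criticalPointMap ψ a₀) u₀).comp (snd ℝ F E)) (a₀, u₀) := by
  have hsplit : (fun p : F × E => criticalPointMap ψ p.1 p.2) =
      fun p => adjoint (fderiv ℝ ψ p.2) (p.1 - a₀) + criticalPointMap ψ a₀ p.2 := by
    ext1 p
    simp only [criticalPointMap, ← map_add, sub_add_sub_cancel]
  have hsnd := hasFDerivAt_snd (𝕜 := ℝ) (p := (a₀, u₀))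
  have hA := ((differentiableAt_adjoint_fderiv hψ).hasFDerivAt.comp (a₀, u₀) hsnd).clm_apply
    ((hasFDerivAt_fst (𝕜 := ℝ) (p := (a₀, u₀))).sub_const a₀)
  have hf := (differentiableAt_criticalPointMap a₀ hψ).hasFDerivAt.comp (a₀, u₀) hsnd
  rw [hsplit]
  refine hA.add hf |>.congr_fderiv ?_
  simp

end Calculus

theorem stmt_10_general {m n : ℕ}
    (U : Set (EuclideanSpace ℝ (Fin m))) (hU : IsOpen U)
    (ψ : EuclideanSpace ℝ (Fin m) → EuclideanSpace ℝ (Fin n))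
    (hψ : ContDiffOn ℝ (⊤ : ℕ∞) ψ U)
    (G : EuclideanSpace ℝ (Fin n) × EuclideanSpace ℝ (Fin m) → EuclideanSpace ℝ (Fin m))
    (hG : ∀ a u, G (a, u) = ContinuousLinearMap.adjoint (fderiv ℝ ψ u) (a - ψ u))
    (a₀ : EuclideanSpace ℝ (Fin n))
    (u₀ : EuclideanSpace ℝ (Fin m)) (hu₀ : u₀ ∈ U)
    (H : EuclideanSpace ℝ (Fin m) →L[ℝ] EuclideanSpace ℝ (Fin m))
    (hH : ∀ v w, ⟪H v, w⟫ =
      fderiv ℝ (fderiv ℝ (fun u => (1 / 2 : ℝ) * ‖a₀ - ψ u‖ ^ 2)) u₀ v w) :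
    (∀ (da : EuclideanSpace ℝ (Fin n)) (du : EuclideanSpace ℝ (Fin m)),
      fderiv ℝ G (a₀, u₀) (da, du) =
        ContinuousLinearMap.adjoint (fderiv ℝ ψ u₀) da - H du) ∧
    ((LinearMap.ker (fderiv ℝ G (a₀, u₀) :
          EuclideanSpace ℝ (Fin n) × EuclideanSpace ℝ (Fin m) →ₗ[ℝ] EuclideanSpace ℝ (Fin m)) :
        Set (EuclideanSpace ℝ (Fin n) × EuclideanSpace ℝ (Fin m))) =
      {p | ContinuousLinearMap.adjoint (fderiv ℝ ψ u₀) p.1 = H p.2}) ∧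
    (Function.Bijective (fun q : LinearMap.ker (fderiv ℝ G (a₀, u₀) :
          EuclideanSpace ℝ (Fin n) × EuclideanSpace ℝ (Fin m) →ₗ[ℝ] EuclideanSpace ℝ (Fin m)) =>
        ((q : EuclideanSpace ℝ (Fin n) × EuclideanSpace ℝ (Fin m))).1) ↔
      Function.Bijective H) := by
  have hψ₀ : ContDiffAt ℝ 2 ψ u₀ := (hψ.contDiffAt (hU.mem_nhds hu₀)).of_le (by norm_cast)
  have hDf : fderiv ℝ (criticalPointMap ψ a₀) u₀ = -H := by
    ext1 v
    refine ext_inner_right ℝ fun w => ?_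
    rw [neg_apply, inner_neg_left, hH, fderiv_fderiv_half_norm_sub_sq_apply a₀ hψ₀, neg_neg]
  have hDG : ∀ da du, fderiv ℝ G (a₀, u₀) (da, du) = adjoint (fderiv ℝ ψ u₀) da - H du := by
    intro da du
    rw [show G = fun p => criticalPointMap ψ p.1 p.2 from funext fun p => hG p.1 p.2,
      (hasFDerivAt_criticalPointMap_uncurry a₀ hψ₀).fderiv, hDf]
    simp [sub_eq_add_neg]
  refine ⟨hDG, ?_, bijective_fst_ker_iff _
    (adjoint (fderiv ℝ ψ u₀)).toLinearMap H.toLinearMap hDG⟩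
  ext ⟨da, du⟩
  simp [hDG, sub_eq_zero]

/-- Chart formulation of Lemma A.2 (lem_character_1-S): the derivative of the defining map of
the critical point locus, its kernel, and well-posedness iff the Hessian is invertible. -/
theorem stmt_10 {m n : ℕ}
    (U : Set (EuclideanSpace ℝ (Fin m))) (hU : IsOpen U)
    (ψ : EuclideanSpace ℝ (Fin m) → EuclideanSpace ℝ (Fin n))
    (hψ : ContDiffOn ℝ (⊤ : ℕ∞) ψ U)
    (hinj : ∀ u ∈ U, Function.Injective (fderiv ℝ ψ u))
    (G : EuclideanSpace ℝ (Fin n) × EuclideanSpace ℝ (Fin m) → EuclideanSpace ℝ (Fin m))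
    (hG : ∀ a u, G (a, u) = ContinuousLinearMap.adjoint (fderiv ℝ ψ u) (a - ψ u))
    (a₀ : EuclideanSpace ℝ (Fin n))
    (u₀ : EuclideanSpace ℝ (Fin m)) (hu₀ : u₀ ∈ U)
    (hG₀ : G (a₀, u₀) = 0)
    (H : EuclideanSpace ℝ (Fin m) →L[ℝ] EuclideanSpace ℝ (Fin m))
    (hH : ∀ v w, ⟪H v, w⟫ =
      fderiv ℝ (fderiv ℝ (fun u => (1 / 2 : ℝ) * ‖a₀ - ψ u‖ ^ 2)) u₀ v w) :
    (∀ (da : EuclideanSpace ℝ (Fin n)) (du : EuclideanSpace ℝ (Fin m)),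
      fderiv ℝ G (a₀, u₀) (da, du) =
        ContinuousLinearMap.adjoint (fderiv ℝ ψ u₀) da - H du) ∧
    ((LinearMap.ker (fderiv ℝ G (a₀, u₀) :
          EuclideanSpace ℝ (Fin n) × EuclideanSpace ℝ (Fin m) →ₗ[ℝ] EuclideanSpace ℝ (Fin m)) :
        Set (EuclideanSpace ℝ (Fin n) × EuclideanSpace ℝ (Fin m))) =
      {p | ContinuousLinearMap.adjoint (fderiv ℝ ψ u₀) p.1 = H p.2}) ∧
    (Function.Bijective (fun q : LinearMap.ker (fderiv ℝ G (a₀, u₀) :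
          EuclideanSpace ℝ (Fin n) × EuclideanSpace ℝ (Fin m) →ₗ[ℝ] EuclideanSpace ℝ (Fin m)) =>
        ((q : EuclideanSpace ℝ (Fin n) × EuclideanSpace ℝ (Fin m))).1) ↔
      Function.Bijective H) :=
  stmt_10_general U hU ψ hψ G hG a₀ u₀ hu₀ H hH
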